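/- Let f(U) = (1/2)‖UUᵀ - M*‖_F² with M* = V*V*ᵀ of rank r and X* = {V*R : R orthogonal}. For any U with dist_F(U, X*) ≤ (1/3)(σ_r*)^{1/2}, writing Δ = U - P_{X*}(U), one has ⟨∇f(U), Δ⟩ ≥ (2/3)σ_r*·‖Δ‖_F², where σ_r* = σ_r(M*). -/

import Mathlib

open Matrix

/-- The Frobenius norm of a real matrix. -/
noncomputable def frob {m n : ℕ} (A : Matrix (Fin m) (Fin n) ℝ) : ℝ :=
  Real.sqrt (∑ i, ∑ j, (A i j) ^ 2)

/-- The trace inner product `⟨A, B⟩ = tr(AᵀB)`. -/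
def mip {m n : ℕ} (A B : Matrix (Fin m) (Fin n) ℝ) : ℝ :=
  (Aᵀ * B).trace

/-- The gradient of `f(U) = (1/2)‖UUᵀ - M‖_F²`. -/
noncomputable def gradf {d r : ℕ} (M : Matrix (Fin d) (Fin d) ℝ)
    (U : Matrix (Fin d) (Fin r) ℝ) : Matrix (Fin d) (Fin r) ℝ :=
  (2 : ℝ) • ((U * Uᵀ - M) * U)

/-!
Write `Us = Vs R`, `Δ = U - Us` and `S = Uᵀ Us`. Because `Us` is a closest point of the orbit
`{Vs Q}` to `U`, `tr(S Q) ≤ tr S` for every orthogonal `Q`; testing this against Givens rotations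
shows that `S` is symmetric. Expanding the gradient,
`⟨∇f(U), Δ⟩ = 2 tr(S ΔᵀΔ) + 2 tr((UᵀΔ)²)`, and the second term is nonnegative since
`UᵀΔ = UᵀU - S` is symmetric. For the first, `xᵀ S x = (Us x + Δ x) ⬝ Us x` with
`‖Us x‖² ≥ σ_r ‖x‖²` (Rayleigh) and `9 ‖Δ x‖² ≤ σ_r ‖x‖²`, so `0 ≤ ‖Us x + 3 Δ x‖²` yields
`xᵀ S x ≥ (2/3) σ_r ‖x‖²`; summing over the rows of `Δ` gives `tr(S ΔᵀΔ) ≥ (2/3) σ_r ‖Δ‖²`.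
-/

section Givens

variable {n : Type*} [DecidableEq n]

def givens (i j : n) (c s : ℝ) : Matrix n n ℝ :=
  1 + (c - 1) • (single i i 1 + single j j 1) + s • (single j i 1 - single i j 1)

lemma givens_transpose (i j : n) (c s : ℝ) : (givens i j c s)ᵀ = givens i j c (-s) := by
  simp only [givens, transpose_add, transpose_smul, transpose_sub, transpose_one,
    transpose_single, neg_smul, smul_sub]
  abel

lemma givens_mul_givens [Fintype n] {i j : n} (hij : i ≠ j) (c s s' : ℝ) :
    givens i j c s * givens i j c s' = 1 + ((c - 1) * (c - 1) + 2 * (c - 1) - s * s') •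
      (single i i 1 + single j j 1) + (s + s' + (c - 1) * s' + s * (c - 1)) •
      (single j i 1 - single i j 1) := by
  set P : Matrix n n ℝ := single i i 1 + single j j 1 with hP
  set K : Matrix n n ℝ := single j i 1 - single i j 1 with hK
  have hPP : P * P = P := by
    simp [P, add_mul, mul_add, single_mul_single_same, single_mul_single_of_ne, hij, hij.symm]
  have hPK : P * K = K := by
    simp [P, K, add_mul, mul_sub, single_mul_single_same, single_mul_single_of_ne, hij, hij.symm]
  have hKP : K * P = K := by
    simp only [P, K, mul_add, sub_mul, single_mul_single_same, single_mul_single_of_ne, ne_eq,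
      hij, hij.symm, not_false_eq_true, mul_one, sub_zero, zero_sub]
    abel
  have hKK : K * K = -P := by
    simp only [P, K, sub_mul, mul_sub, single_mul_single_same, single_mul_single_of_ne, ne_eq,
      hij, hij.symm, not_false_eq_true, mul_one, sub_zero, zero_sub]
    abel
  simp only [givens, ← hP, ← hK, add_mul, mul_add, one_mul, mul_one, smul_mul_assoc,
    mul_smul_comm, hPP, hPK, hKP, hKK, smul_neg]
  module

lemma givens_mem_orthogonalGroup [Fintype n] {i j : n} (hij : i ≠ j) {c s : ℝ}
    (hcs : c ^ 2 + s ^ 2 = 1) : givens i j c s ∈ orthogonalGroup n ℝ := by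
  rw [mem_orthogonalGroup_iff, givens_transpose, givens_mul_givens hij]
  have hP : (c - 1) * (c - 1) + 2 * (c - 1) - s * -s = 0 := by linear_combination hcs
  have hK : s + -s + (c - 1) * -s + s * (c - 1) = 0 := by ring
  rw [hP, hK, zero_smul, zero_smul, add_zero, add_zero]

lemma trace_mul_givens [Fintype n] (S : Matrix n n ℝ) (i j : n) (c s : ℝ) :
    (S * givens i j c s).trace = S.trace + (c - 1) * (S i i + S j j) + s * (S i j - S j i) := by
  have hsingle (k l : n) : (S * single k l 1).trace = S l k := by simp [trace_mul_single]
  simp only [givens, mul_add, mul_sub, mul_one, Matrix.mul_smul, trace_add, trace_sub, trace_smul,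
    hsingle, smul_eq_mul]

end Givens

lemma eq_zero_of_forall_sub_one_mul_add_mul_nonpos {a t : ℝ}
    (h : ∀ c s : ℝ, c ^ 2 + s ^ 2 = 1 → (c - 1) * a + s * t ≤ 0) : t = 0 := by
  by_contra ht
  set ρ := Real.sqrt (a ^ 2 + t ^ 2)
  have hρ2 : ρ ^ 2 = a ^ 2 + t ^ 2 := Real.sq_sqrt (by positivity)
  have hρ : 0 < ρ := Real.sqrt_pos.2 (by positivity)
  have hle := h (a / ρ) (t / ρ) (by field_simp; linarith)
  have hρa : ρ ≤ a := by
    have hval : (a / ρ - 1) * a + t / ρ * t = ρ - a := by field_simp; linarith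
    linarith
  have hsq : a ^ 2 + t ^ 2 ≤ a ^ 2 := hρ2 ▸ pow_le_pow_left₀ hρ.le hρa 2
  linarith [sq_pos_of_ne_zero ht]

lemma isSymm_of_forall_trace_mul_le {n : Type*} [Fintype n] [DecidableEq n] (S : Matrix n n ℝ)
    (h : ∀ Q ∈ orthogonalGroup n ℝ, (S * Q).trace ≤ S.trace) : S.IsSymm := by
  refine IsSymm.ext fun i j => ?_
  rcases eq_or_ne j i with rfl | hji
  · rfl
  have := eq_zero_of_forall_sub_one_mul_add_mul_nonpos (a := S j j + S i i) (t := S j i - S i j)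
    fun c s hcs => by
      have := h _ (givens_mem_orthogonalGroup hji hcs)
      rw [trace_mul_givens] at this
      linarith
  exact sub_eq_zero.1 this

lemma dotProduct_self_nonneg {n : Type*} [Fintype n] (x : n → ℝ) : 0 ≤ x ⬝ᵥ x :=
  Finset.sum_nonneg fun i _ => mul_self_nonneg (x i)

lemma mulVec_dotProduct_mulVec_self {m n : Type*} [Fintype m] [Fintype n] (A : Matrix m n ℝ)
    (x : n → ℝ) : (A *ᵥ x) ⬝ᵥ (A *ᵥ x) = x ⬝ᵥ ((Aᵀ * A) *ᵥ x) := by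
  symm
  rw [← mulVec_mulVec, dotProduct_mulVec, vecMul_transpose]

lemma trace_mul_transpose_mul_self {m n : Type*} [Fintype m] [Fintype n] (S : Matrix n n ℝ)
    (A : Matrix m n ℝ) : (S * (Aᵀ * A)).trace = ∑ i, A i ⬝ᵥ (S *ᵥ A i) := by
  rw [← Matrix.mul_assoc, trace_mul_comm, ← Matrix.mul_assoc]
  simp only [trace, diag, mul_apply, transpose_apply, dotProduct, mulVec, Finset.mul_sum,
    Finset.sum_mul]
  refine Finset.sum_congr rfl fun i _ => ?_
  rw [Finset.sum_comm]
  simp only [mul_assoc]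

lemma Matrix.IsSymm.trace_mul_self_nonneg {n : Type*} [Fintype n] {T : Matrix n n ℝ}
    (hT : T.IsSymm) : 0 ≤ (T * T).trace := by
  simpa only [conjTranspose_eq_transpose_of_trivial, hT.eq] using
    (posSemidef_conjTranspose_mul_self T).trace_nonneg

namespace Matrix.IsHermitian

lemma iInf_eigenvalues_mul_dotProduct_le {n : Type*} [Fintype n] [DecidableEq n]
    {A : Matrix n n ℝ} (hA : A.IsHermitian) (x : n → ℝ) :
    (⨅ i, hA.eigenvalues i) * (x ⬝ᵥ x) ≤ x ⬝ᵥ (A *ᵥ x) := by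
  set V : Matrix n n ℝ := (hA.eigenvectorUnitary : Matrix n n ℝ) with hV
  have hVt : star V = Vᵀ := by simp [star_eq_conjTranspose]
  set y : n → ℝ := Vᵀ *ᵥ x with hy
  have hyy : y ⬝ᵥ y = x ⬝ᵥ x := by
    rw [hy, dotProduct_mulVec, vecMul_transpose, mulVec_mulVec, ← hVt,
      (mem_unitaryGroup_iff).1 hA.eigenvectorUnitary.2, one_mulVec]
  have hAx : x ⬝ᵥ (A *ᵥ x) = ∑ i, hA.eigenvalues i * (y i * y i) := by
    conv_lhs => rw [hA.spectral_theorem, Unitary.conjStarAlgAut_apply]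
    rw [hVt, ← mulVec_mulVec, ← mulVec_mulVec, dotProduct_mulVec, ← hV, ← mulVec_transpose]
    simp only [← hy, dotProduct, mulVec_diagonal, Function.comp_apply, RCLike.ofReal_real_eq_id,
      id_eq]
    exact Finset.sum_congr rfl fun i _ => by ring
  rw [hAx, ← hyy, dotProduct, Finset.mul_sum]
  exact Finset.sum_le_sum fun i _ =>
    mul_le_mul_of_nonneg_right (ciInf_le (Finite.bddBelow_range _) i) (mul_self_nonneg _)

lemma iInf_eigenvalues_mul_dotProduct_le_of_mem_orthogonalGroup {m n : Type*} [Fintype m]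
    [Fintype n] [DecidableEq n] {V : Matrix m n ℝ} (hV : (Vᵀ * V).IsHermitian) {R : Matrix n n ℝ}
    (hR : R ∈ orthogonalGroup n ℝ) (x : n → ℝ) :
    (⨅ i, hV.eigenvalues i) * (x ⬝ᵥ x) ≤ ((V * R) *ᵥ x) ⬝ᵥ ((V * R) *ᵥ x) := by
  have hRx : (R *ᵥ x) ⬝ᵥ (R *ᵥ x) = x ⬝ᵥ x := by
    rw [mulVec_dotProduct_mulVec_self, (mem_orthogonalGroup_iff' _ _).1 hR, one_mulVec]
  rw [← mulVec_mulVec, mulVec_dotProduct_mulVec_self V, ← hRx]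
  exact hV.iInf_eigenvalues_mul_dotProduct_le _

end Matrix.IsHermitian

lemma two_thirds_mul_le_add_dotProduct {n : Type*} [Fintype n] {a e : n → ℝ} {c : ℝ}
    (ha : c ≤ a ⬝ᵥ a) (he : 9 * (e ⬝ᵥ e) ≤ c) : 2 / 3 * c ≤ (a + e) ⬝ᵥ a := by
  have hsq := dotProduct_self_nonneg (a + (3 : ℝ) • e)
  simp only [add_dotProduct, dotProduct_add, smul_dotProduct, dotProduct_smul, smul_eq_mul,
    dotProduct_comm e a] at hsq ⊢
  linarith

section Frobenius

variable {m n : ℕ}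

lemma frob_nonneg (A : Matrix (Fin m) (Fin n) ℝ) : 0 ≤ frob A :=
  Real.sqrt_nonneg _

lemma frob_sq_eq_sum_dotProduct (A : Matrix (Fin m) (Fin n) ℝ) :
    frob A ^ 2 = ∑ i, A i ⬝ᵥ A i := by
  rw [frob, Real.sq_sqrt (by positivity)]
  simp only [dotProduct, sq]

lemma frob_sq (A : Matrix (Fin m) (Fin n) ℝ) : frob A ^ 2 = (Aᵀ * A).trace := by
  rw [frob_sq_eq_sum_dotProduct, ← Matrix.one_mul (Aᵀ * A), trace_mul_transpose_mul_self]
  simp only [one_mulVec]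

lemma frob_sub_sq (A B : Matrix (Fin m) (Fin n) ℝ) :
    frob (A - B) ^ 2 = frob A ^ 2 - 2 * (Aᵀ * B).trace + frob B ^ 2 := by
  rw [frob_sq, frob_sq, frob_sq, transpose_sub, Matrix.sub_mul, Matrix.mul_sub, Matrix.mul_sub,
    trace_sub, trace_sub, trace_sub, ← trace_transpose (Bᵀ * A), transpose_mul,
    transpose_transpose]
  ring

lemma frob_mul_of_mem_orthogonalGroup (A : Matrix (Fin m) (Fin n) ℝ)
    {R : Matrix (Fin n) (Fin n) ℝ} (hR : R ∈ orthogonalGroup (Fin n) ℝ) :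
    frob (A * R) = frob A := by
  rw [← sq_eq_sq₀ (frob_nonneg _) (frob_nonneg _), frob_sq, frob_sq, transpose_mul,
    trace_mul_comm, Matrix.mul_assoc, ← Matrix.mul_assoc R, (mem_orthogonalGroup_iff _ _).1 hR,
    Matrix.one_mul, trace_mul_comm]

lemma mulVec_dotProduct_self_le_frob_sq_mul (A : Matrix (Fin m) (Fin n) ℝ) (x : Fin n → ℝ) :
    (A *ᵥ x) ⬝ᵥ (A *ᵥ x) ≤ frob A ^ 2 * (x ⬝ᵥ x) := by
  rw [frob_sq_eq_sum_dotProduct, Finset.sum_mul]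
  refine Finset.sum_le_sum fun i _ => ?_
  simpa only [mulVec, dotProduct, sq] using Finset.sum_mul_sq_le_sq_mul_sq Finset.univ (A i) x

lemma mul_frob_sq_le_trace_mul (A : Matrix (Fin m) (Fin n) ℝ) {S : Matrix (Fin n) (Fin n) ℝ}
    {c : ℝ} (hS : ∀ x, c * (x ⬝ᵥ x) ≤ x ⬝ᵥ (S *ᵥ x)) :
    c * frob A ^ 2 ≤ (S * (Aᵀ * A)).trace := by
  rw [frob_sq_eq_sum_dotProduct, trace_mul_transpose_mul_self, Finset.mul_sum]
  exact Finset.sum_le_sum fun i _ => hS (A i)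

lemma trace_transpose_mul_le_of_frob_sub_le {A B C : Matrix (Fin m) (Fin n) ℝ}
    (hle : frob (A - B) ≤ frob (A - C)) (hBC : frob B = frob C) :
    (Aᵀ * C).trace ≤ (Aᵀ * B).trace := by
  have := pow_le_pow_left₀ (frob_nonneg _) hle 2
  rw [frob_sub_sq, frob_sub_sq, hBC] at this
  linarith

lemma isSymm_transpose_mul_of_forall_frob_sub_le {U V : Matrix (Fin m) (Fin n) ℝ}
    {R : Matrix (Fin n) (Fin n) ℝ} (hR : R ∈ orthogonalGroup (Fin n) ℝ)
    (hclosest : ∀ Q ∈ orthogonalGroup (Fin n) ℝ, frob (U - V * R) ≤ frob (U - V * Q)) :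
    (Uᵀ * (V * R)).IsSymm := by
  refine isSymm_of_forall_trace_mul_le _ fun Q hQ => ?_
  have := trace_transpose_mul_le_of_frob_sub_le (hclosest (R * Q) (mul_mem hR hQ))
    (by rw [frob_mul_of_mem_orthogonalGroup _ hR,
      frob_mul_of_mem_orthogonalGroup _ (mul_mem hR hQ)])
  simpa only [Matrix.mul_assoc] using this

lemma two_thirds_mul_dotProduct_le_of_frob_sub_le {U B : Matrix (Fin m) (Fin n) ℝ} {σ : ℝ}
    (hB : ∀ x, σ * (x ⬝ᵥ x) ≤ (B *ᵥ x) ⬝ᵥ (B *ᵥ x)) (hUB : 9 * frob (U - B) ^ 2 ≤ σ)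
    (x : Fin n → ℝ) : 2 / 3 * σ * (x ⬝ᵥ x) ≤ x ⬝ᵥ ((Uᵀ * B) *ᵥ x) := by
  have hU : U *ᵥ x = B *ᵥ x + (U - B) *ᵥ x := by rw [sub_mulVec]; abel
  have hΔ := mulVec_dotProduct_self_le_frob_sq_mul (U - B) x
  have hσ := mul_le_mul_of_nonneg_right hUB (dotProduct_self_nonneg x)
  rw [mul_assoc, ← mulVec_mulVec, dotProduct_mulVec, vecMul_transpose, hU]
  exact two_thirds_mul_le_add_dotProduct (hB x) (by linarith)

end Frobenius

lemma mip_gradf_sub {d r : ℕ} (U B : Matrix (Fin d) (Fin r) ℝ) :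
    mip (gradf (B * Bᵀ) U) (U - B) = 2 * ((Uᵀ * B * ((U - B)ᵀ * (U - B))).trace
      + (Uᵀ * (U - B) * (Uᵀ * (U - B))).trace) := by
  have hsymm : (U * Uᵀ - B * Bᵀ)ᵀ = U * Uᵀ - B * Bᵀ := by
    simp only [transpose_sub, transpose_mul, transpose_transpose]
  rw [mip, gradf, transpose_smul, smul_mul, trace_smul, smul_eq_mul, transpose_mul, hsymm,
    ← trace_add]
  congr 2
  simp only [transpose_sub, Matrix.mul_sub, Matrix.sub_mul, Matrix.mul_assoc]
  abel

theorem matrix_factorization_local_regularity_lower_general {d r : ℕ} (hr : 0 < r)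
    (Vs : Matrix (Fin d) (Fin r) ℝ)
    (σr : ℝ)
    (hherm : (Vsᵀ * Vs).IsHermitian)
    (hσr : σr = haveI : Nonempty (Fin r) := Fin.pos_iff_nonempty.mp hr
      ⨅ i, hherm.eigenvalues i)
    (U Us : Matrix (Fin d) (Fin r) ℝ)
    (hUs : ∃ R : Matrix (Fin r) (Fin r) ℝ,
      R * Rᵀ = 1 ∧ Rᵀ * R = 1 ∧ Us = Vs * R)
    (hproj : ∀ R : Matrix (Fin r) (Fin r) ℝ, R * Rᵀ = 1 → Rᵀ * R = 1 →
      frob (U - Us) ≤ frob (U - Vs * R))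
    (hclose : frob (U - Us) ≤ 1 / 3 * Real.sqrt σr) :
    2 / 3 * σr * frob (U - Us) ^ 2 ≤ mip (gradf (Vs * Vsᵀ) U) (U - Us) := by
  obtain ⟨R, hRRt, -, rfl⟩ := hUs
  have hR : R ∈ orthogonalGroup (Fin r) ℝ := (mem_orthogonalGroup_iff _ _).2 hRRt
  have hpsd : (Vsᵀ * Vs).PosSemidef := by
    simpa only [conjTranspose_eq_transpose_of_trivial] using posSemidef_conjTranspose_mul_self Vs
  have hσ : 0 ≤ σr := hσr ▸ Real.iInf_nonneg hpsd.eigenvalues_nonneg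
  have hsmall : 9 * frob (U - Vs * R) ^ 2 ≤ σr := by
    have := pow_le_pow_left₀ (frob_nonneg _) hclose 2
    rw [mul_pow, Real.sq_sqrt hσ] at this
    linarith
  have hsymm : (Uᵀ * (Vs * R)).IsSymm := isSymm_transpose_mul_of_forall_frob_sub_le hR
    fun Q hQ => hproj Q ((mem_orthogonalGroup_iff _ _).1 hQ) ((mem_orthogonalGroup_iff' _ _).1 hQ)
  have hVsR (x : Fin r → ℝ) : σr * (x ⬝ᵥ x) ≤ ((Vs * R) *ᵥ x) ⬝ᵥ ((Vs * R) *ᵥ x) :=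
    hσr ▸ IsHermitian.iInf_eigenvalues_mul_dotProduct_le_of_mem_orthogonalGroup hherm hR x
  have hmain := mul_frob_sq_le_trace_mul (U - Vs * R)
    (two_thirds_mul_dotProduct_le_of_frob_sub_le hVsR hsmall)
  have hcross : 0 ≤ (Uᵀ * (U - Vs * R) * (Uᵀ * (U - Vs * R))).trace := by
    refine IsSymm.trace_mul_self_nonneg ?_
    rw [Matrix.mul_sub]
    exact (IsSymm.ext fun i j => by simp only [transpose_apply, mul_apply, mul_comm]).sub hsymm
  have hM : Vs * Vsᵀ = Vs * R * (Vs * R)ᵀ := by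
    rw [transpose_mul, Matrix.mul_assoc, ← Matrix.mul_assoc R, hRRt, Matrix.one_mul]
  rw [hM, mip_gradf_sub]
  linarith [mul_nonneg hσ (sq_nonneg (frob (U - Vs * R)))]

/-- For `f(U) = (1/2)‖UUᵀ - M*‖_F²` with `M* = V*V*ᵀ` of rank `r`: for any `U`
within Frobenius distance `(1/3)(σ_r*)^{1/2}` of `X* = {V*R : R orthogonal}`,
writing `Δ = U - P_{X*}(U)`, one has `⟨∇f(U), Δ⟩ ≥ (2/3)σ_r*·‖Δ‖_F²`. -/
theorem matrix_factorization_local_regularity_lower {d r : ℕ} (hr : 0 < r)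
    (Vs : Matrix (Fin d) (Fin r) ℝ) (hrank : Vs.rank = r)
    (σr : ℝ)
    (hherm : (Vsᵀ * Vs).IsHermitian)
    (hσr : σr = haveI : Nonempty (Fin r) := Fin.pos_iff_nonempty.mp hr
      ⨅ i, hherm.eigenvalues i)
    (U Us : Matrix (Fin d) (Fin r) ℝ)
    (hUs : ∃ R : Matrix (Fin r) (Fin r) ℝ,
      R * Rᵀ = 1 ∧ Rᵀ * R = 1 ∧ Us = Vs * R)
    (hproj : ∀ R : Matrix (Fin r) (Fin r) ℝ, R * Rᵀ = 1 → Rᵀ * R = 1 →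
      frob (U - Us) ≤ frob (U - Vs * R))
    (hclose : frob (U - Us) ≤ 1 / 3 * Real.sqrt σr) :
    2 / 3 * σr * frob (U - Us) ^ 2 ≤ mip (gradf (Vs * Vsᵀ) U) (U - Us) :=
  matrix_factorization_local_regularity_lower_general hr Vs σr hherm hσr U Us hUs hproj hclose
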